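/- Let T be a finite rooted tree where each node M covers a nonempty subset S(M) of a dataset of n points, the root covers all n points, each inner node's children partition its set, and each leaf M stores exactly C(M) = |S(M)| points. Define P(M) = |S(M)|/n, H(M) = -∑_{children i of M} (|S(i)|/|S(M)|) log₂(|S(i)|/|S(M)|) for inner nodes, and H(M) = log₂ C(M) for leaves. Then ∑_{M ∈ T} P(M)·H(M) = log₂ n. -/

import Mathlib

/-- An index tree: each node records the subset of the dataset it covers. -/
inductive ITree (α : Type) : Type where
  | leaf : Finset α → ITree α
  | node : Finset α → List (ITree α) → ITree α

namespace ITree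

/-- The set of data points covered by (the root of) a tree. -/
def cover {α : Type} : ITree α → Finset α
  | .leaf s => s
  | .node s _ => s

/-- Well-formedness: every node covers a nonempty set, the children of an inner
node cover pairwise disjoint sets whose union is the parent's set. -/
inductive WF {α : Type} [DecidableEq α] : ITree α → Prop where
  | leaf (s : Finset α) : s.Nonempty → WF (.leaf s)
  | node (s : Finset α) (cs : List (ITree α)) :
      s.Nonempty → cs ≠ [] →
      (∀ t ∈ cs, WF t) →
      (cs.map cover).Pairwise (fun a b => Disjoint a b) →
      (cs.map cover).foldr (· ∪ ·) ∅ = s →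
      WF (.node s cs)

/-- `wsum n t = ∑_{M ∈ t} P(M)·H(M)` where `P(M) = |S(M)|/n`,
`H` is the branch entropy for inner nodes and `log₂` of the capacity for leaves. -/
noncomputable def wsum {α : Type} (n : ℝ) : ITree α → ℝ
  | .leaf s => ((s.card : ℝ) / n) * Real.logb 2 (s.card)
  | .node s cs =>
      ((s.card : ℝ) / n) *
        (-(cs.map (fun t => ((cover t).card : ℝ) / s.card *
            Real.logb 2 (((cover t).card : ℝ) / s.card))).sum)
      + (cs.attach.map (fun x => wsum n x.1)).sum
  decreasing_by
    have := List.sizeOf_lt_of_mem x.2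
    simp at *
    omega

end ITree

/-! The weighted entropy of a well-formed tree telescopes: by the grouping property of entropy,
the entropy term of an inner node covering `N` points turns the children's contributions
`(cᵢ / n) log₂ cᵢ` into the single contribution `(N / n) log₂ N` of a leaf with `N` points.
So every subtree contributes as if it were a leaf, and the root yields `(n / n) log₂ n`. -/

theorem Finset.card_foldr_union_of_pairwise_disjoint {α : Type*} [DecidableEq α]
    {l : List (Finset α)} (h : l.Pairwise Disjoint) :
    (l.foldr (· ∪ ·) ∅).card = (l.map Finset.card).sum := by
  induction l with
  | nil => rfl
  | cons a l ih =>
    obtain ⟨ha, hl⟩ := List.pairwise_cons.mp h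
    have hdisj : Disjoint a (l.foldr (· ∪ ·) ∅) := by
      clear ih hl h
      induction l <;> simp_all [Finset.disjoint_union_right]
    simp [Finset.card_union_of_disjoint hdisj, ih hl]

theorem Real.grouping_logb {β : Type*} (l : List β) (w : β → ℝ) {b N : ℝ}
    (hN : (l.map w).sum = N) (hN0 : N ≠ 0) (n : ℝ) :
    N / n * -(l.map fun t => w t / N * Real.logb b (w t / N)).sum
        + (l.map fun t => w t / n * Real.logb b (w t)).sum
      = N / n * Real.logb b N := by
  have hterm : ∀ t, -(N / n) * (w t / N * Real.logb b (w t / N)) + w t / n * Real.logb b (w t)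
      = w t * (Real.logb b N / n) := by
    intro t
    rcases eq_or_ne (w t) 0 with hw | hw
    · simp [hw]
    · rw [Real.logb_div hw hN0]
      field_simp
      ring
  calc N / n * -(l.map fun t => w t / N * Real.logb b (w t / N)).sum
        + (l.map fun t => w t / n * Real.logb b (w t)).sum
      = (l.map fun t => -(N / n) * (w t / N * Real.logb b (w t / N))
          + w t / n * Real.logb b (w t)).sum := by
        rw [List.sum_map_add, List.sum_map_mul_left]
        ring
    _ = (l.map w).sum * (Real.logb b N / n) := by
        simp only [hterm, List.sum_map_mul_right]
    _ = N / n * Real.logb b N := by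
        rw [hN]
        ring

namespace ITree

variable {α : Type} [DecidableEq α]

theorem WF.cover_nonempty {t : ITree α} (h : WF t) : (cover t).Nonempty := by
  cases h <;> assumption

theorem WF.wsum_eq {t : ITree α} (h : WF t) (n : ℝ) :
    wsum n t = ((cover t).card : ℝ) / n * Real.logb 2 (cover t).card := by
  induction h with
  | leaf s _ => rw [wsum]; rfl
  | node s cs hs _ _ hdisj hunion ih =>
    have hchildren : (cs.attach.map fun x => wsum n x.1)
        = cs.map fun t => ((cover t).card : ℝ) / n * Real.logb 2 (cover t).card := by
      rw [List.attach_map_val (f := wsum n)]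
      exact List.map_congr_left ih
    have hcard : (cs.map fun t => ((cover t).card : ℝ)).sum = s.card := by
      rw [← hunion, Finset.card_foldr_union_of_pairwise_disjoint hdisj, Nat.cast_list_sum,
        List.map_map, List.map_map]
      rfl
    rw [wsum, hchildren]
    exact Real.grouping_logb cs _ hcard (by exact_mod_cast hs.card_pos.ne') n

end ITree

/-- entropy conservation: for a well-formed index tree over `n`
data points, the access-probability-weighted sum of node entropies equals `log₂ n`. -/
theorem weighted_entropy_sum {α : Type} [DecidableEq α] (t : ITree α) (n : ℕ)
    (hwf : ITree.WF t) (hcard : (ITree.cover t).card = n) :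
    ITree.wsum (n : ℝ) t = Real.logb 2 n := by
  have hn : (n : ℝ) ≠ 0 := by
    rw [← hcard]
    exact_mod_cast hwf.cover_nonempty.card_pos.ne'
  rw [hwf.wsum_eq, hcard, div_self hn, one_mul]
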